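/- arXiv:math/0403337 — 3 statements merged into one kernel-verified Lean document; each statement's English description precedes it below -/
import Mathlib

section
/- Let M be a connected finite matroid with at least two elements, let X be a nontrivial connected flat of M, and let x ∈ X be such that the restriction M|(X − x) is connected. Then the deletion M∖x is connected. -/
open Set
open scoped Matroid

/-!
Since `X` is dependent and `M|X` is connected, some circuit `C` of `M` through `x` lies in `X`.
For `a ∉ X`, strong circuit elimination of `x` between a circuit through `a` and `x` and `C`
gives a circuit of `M \ x` through `a` that meets `C - x ⊆ X - x`. As `M|(X - x)` is connected
and, in a finitary matroid, lying in a common circuit is transitive, any two elements of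
`M \ x` lie in a common circuit.
-/

namespace LPM

variable {α β : Type*}

/-- `I` is a partial transversal of the set family `N`: there is an injection
matching each element of `I` to an index of a member of the family containing it. -/
def IsPT {ι : Type*} (N : ι → Set α) (I : Set α) : Prop :=
  ∃ f : I → ι, Function.Injective f ∧ ∀ x : I, (x : α) ∈ N (f x)

/-- `I` is a (full) transversal of the set family `N`: there is a bijection
matching each element of `I` to an index of a member of the family containing it. -/
def IsT {ι : Type*} (N : ι → Set α) (I : Set α) : Prop :=
  ∃ f : I → ι, Function.Bijective f ∧ ∀ x : I, (x : α) ∈ N (f x)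

/-- A lattice path presentation with nullity `m` and rank `r`: a sequence of
intervals `[l i, g i] ⊆ {1, …, m + r}` whose left endpoints strictly increase
and whose right endpoints strictly increase. -/
structure LPP (m r : ℕ) where
  l : Fin r → ℕ
  g : Fin r → ℕ
  l_strictMono : StrictMono l
  g_strictMono : StrictMono g
  one_le_l : ∀ i, 1 ≤ l i
  l_le_g : ∀ i, l i ≤ g i
  g_le : ∀ i, g i ≤ m + r

/-- The intervals of a lattice path presentation. -/
def LPP.N {m r : ℕ} (P : LPP m r) (i : Fin r) : Set ℕ := Set.Icc (P.l i) (P.g i)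

/-- `M` is the lattice path matroid `M[N]` of the presentation `P`: the ground set
is `{1, …, m + r}` and the independent sets are exactly the partial transversals
of the intervals of `P`. -/
def IsLPMOf {m r : ℕ} (P : LPP m r) (M : Matroid ℕ) : Prop :=
  M.E = Set.Icc 1 (m + r) ∧
    ∀ I : Set ℕ, M.Indep I ↔ I ⊆ Set.Icc 1 (m + r) ∧ IsPT P.N I

/-- `M` is isomorphic to `M'`: there is a bijection between the ground sets
carrying independent sets to independent sets in both directions. -/
def IsoTo (M : Matroid α) (M' : Matroid β) : Prop :=
  ∃ f : α → β, Set.BijOn f M.E M'.E ∧ ∀ I ⊆ M.E, (M.Indep I ↔ M'.Indep (f '' I))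

/-- A lattice path matroid: a matroid isomorphic to `M[N]` for some lattice path
presentation (presentations with `r = 0` give the rank-zero matroids). -/
def IsLPMatroid (M : Matroid α) : Prop :=
  ∃ (m r : ℕ) (P : LPP m r) (M₀ : Matroid ℕ), IsLPMOf P M₀ ∧ IsoTo M M₀

/-- A circuit of a matroid: a minimal dependent subset of the ground set. -/
def Circuit (M : Matroid α) (C : Set α) : Prop :=
  C ⊆ M.E ∧ ¬ M.Indep C ∧ ∀ D : Set α, D ⊂ C → M.Indep D

/-- A matroid is connected if every two distinct elements of the ground set lie
in a common circuit. -/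
def Connected (M : Matroid α) : Prop :=
  ∀ x ∈ M.E, ∀ y ∈ M.E, x ≠ y → ∃ C, Circuit M C ∧ x ∈ C ∧ y ∈ C

/-- The rank of a set in a matroid: the supremum of the cardinalities of its
independent subsets. -/
noncomputable def rk (M : Matroid α) (X : Set α) : ℕ :=
  sSup {n | ∃ I, I ⊆ X ∧ M.Indep I ∧ I.ncard = n}

/-- A nontrivial connected flat: a flat that is dependent and whose restriction
is a connected matroid. -/
def NTConnFlat (M : Matroid α) (X : Set α) : Prop :=
  M.IsFlat X ∧ ¬ M.Indep X ∧ Connected (M ↾ X)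

/-- Deletion of a set from a matroid. -/
def delete (M : Matroid α) (D : Set α) : Matroid α := M ↾ (M.E \ D)

/-- Contraction of a set in a matroid, defined via duality. -/
def contract (M : Matroid α) (C : Set α) : Matroid α := (delete M✶ C)✶

/-- `Minor M' M` means that `M'` is obtained from `M` by a sequence of deletions
and contractions. -/
inductive Minor : Matroid α → Matroid α → Prop
  | refl (M : Matroid α) : Minor M M
  | del {M' M : Matroid α} (D : Set α) (h : Minor M' M) : Minor (delete M' D) M
  | con {M' M : Matroid α} (C : Set α) (h : Minor M' M) : Minor (contract M' C) M

end LPM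

namespace Matroid

variable {α : Type*} {M : Matroid α} {R S C C₁ C₂ X : Set α} {a e f g x : α}

def ConnectedTo (M : Matroid α) (e f : α) : Prop :=
  (e = f ∧ e ∈ M.E) ∨ ∃ C, M.IsCircuit C ∧ e ∈ C ∧ f ∈ C

lemma ConnectedTo.symm (h : M.ConnectedTo e f) : M.ConnectedTo f e := by
  obtain ⟨rfl, he⟩ | ⟨C, hC, he, hf⟩ := h
  · exact .inl ⟨rfl, he⟩
  · exact .inr ⟨C, hC, hf, he⟩

lemma ConnectedTo.exists_isCircuit (h : M.ConnectedTo e f) (hne : e ≠ f) :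
    ∃ C, M.IsCircuit C ∧ e ∈ C ∧ f ∈ C :=
  h.resolve_left fun h' ↦ hne h'.1

/-- Oxley, Proposition 4.1.2, by induction on `|C₁ ∪ C₂|`. -/
lemma IsCircuit.exists_isCircuit_mem_mem [M.Finitary] (hC₁ : M.IsCircuit C₁)
    (hC₂ : M.IsCircuit C₂) (hC₁₂ : (C₁ ∩ C₂).Nonempty) (he : e ∈ C₁) (hg : g ∈ C₂) :
    ∃ C, M.IsCircuit C ∧ e ∈ C ∧ g ∈ C := by
  induction hn : (C₁ ∪ C₂).ncard using Nat.strong_induction_on generalizing C₁ C₂ with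
  | _ n ih =>
  by_cases heC₂ : e ∈ C₂
  · exact ⟨C₂, hC₂, heC₂, hg⟩
  by_cases hgC₁ : g ∈ C₁
  · exact ⟨C₁, hC₁, he, hgC₁⟩
  obtain ⟨f, hf₁, hf₂⟩ := hC₁₂
  have hlt {D : Set α} (hD : D ⊂ C₁ ∪ C₂) : D.ncard < n :=
    hn ▸ ncard_lt_ncard hD (hC₁.finite.union hC₂.finite)
  obtain ⟨C₃, hC₃U, hC₃, heC₃⟩ := hC₁.strong_elimination hC₂ hf₁ hf₂ he heC₂
  obtain ⟨C₄, hC₄U, hC₄, hgC₄⟩ := hC₂.strong_elimination hC₁ hf₂ hf₁ hg hgC₁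
  rw [union_comm] at hC₄U
  have hfC₃ : f ∉ C₃ := fun h ↦ (hC₃U h).2 rfl
  have hfC₄ : f ∉ C₄ := fun h ↦ (hC₄U h).2 rfl
  obtain ⟨d, hdC₃, hdC₁⟩ := not_subset.1 fun hss ↦ hfC₃ (hC₃.eq_of_subset_isCircuit hC₁ hss ▸ hf₁)
  obtain ⟨l, hlC₄, hlC₂⟩ := not_subset.1 fun hss ↦ hfC₄ (hC₄.eq_of_subset_isCircuit hC₂ hss ▸ hf₂)
  have hdC₂ : d ∈ C₂ := (hC₃U hdC₃).1.resolve_left hdC₁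
  have hlC₁ : l ∈ C₁ := (hC₄U hlC₄).1.resolve_right hlC₂
  obtain hss | heq := (union_subset subset_union_left (hC₄U.trans sdiff_subset)).ssubset_or_eq
  · exact ih _ (hlt hss) hC₁ hC₄ ⟨l, hlC₁, hlC₄⟩ he hgC₄ rfl
  -- Otherwise `C₂ \ C₁ ⊆ C₄`, so `C₃` and `C₄` share `d` and both avoid `f`.
  have hdC₄ : d ∈ C₄ := (heq.symm ▸ Or.inr hdC₂ : d ∈ C₁ ∪ C₄).resolve_left hdC₁
  have hss : C₃ ∪ C₄ ⊂ C₁ ∪ C₂ :=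
    (union_subset hC₃U hC₄U).trans_ssubset (sdiff_singleton_ssubset.2 (.inl hf₁))
  exact ih _ (hlt hss) hC₃ hC₄ ⟨d, hdC₃, hdC₄⟩ heC₃ hgC₄ rfl

lemma ConnectedTo.trans [M.Finitary] (hef : M.ConnectedTo e f) (hfg : M.ConnectedTo f g) :
    M.ConnectedTo e g := by
  obtain ⟨rfl, -⟩ | ⟨C₁, hC₁, he₁, hf₁⟩ := hef
  · exact hfg
  obtain ⟨rfl, -⟩ | ⟨C₂, hC₂, hf₂, hg₂⟩ := hfg
  · exact .inr ⟨C₁, hC₁, he₁, hf₁⟩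
  exact .inr (hC₁.exists_isCircuit_mem_mem hC₂ ⟨f, hf₁, hf₂⟩ he₁ hg₂)

lemma ConnectedTo.of_restrict_subset (h : (M ↾ R).ConnectedTo e f) (hRS : R ⊆ S)
    (hS : S ⊆ M.E) : (M ↾ S).ConnectedTo e f := by
  obtain ⟨rfl, he⟩ | ⟨C, hC, he, hf⟩ := h
  · exact .inl ⟨rfl, hRS he⟩
  obtain ⟨hC, hCR⟩ := (restrict_isCircuit_iff (hRS.trans hS)).1 hC
  exact .inr ⟨C, hC.isCircuit_restrict_of_subset (hCR.trans hRS), he, hf⟩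

lemma exists_isCircuit_mem_subset (hXE : X ⊆ M.E) (hX : ¬ M.Indep X)
    (hconn : ∀ e ∈ X, ∀ f ∈ X, (M ↾ X).ConnectedTo e f) (hx : x ∈ X) :
    ∃ C ⊆ X, M.IsCircuit C ∧ x ∈ C := by
  obtain ⟨C, hCX, hC⟩ := ((not_indep_iff hXE).1 hX).exists_isCircuit_subset
  obtain ⟨w, hw⟩ := hC.nonempty
  obtain ⟨rfl, -⟩ | ⟨C', hC', hxC', -⟩ := hconn x hx w (hCX hw)
  · exact ⟨C, hCX, hC, hw⟩
  obtain ⟨hC', hC'X⟩ := (restrict_isCircuit_iff hXE).1 hC'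
  exact ⟨C', hC'X, hC', hxC'⟩

lemma ConnectedTo.exists_connectedTo_restrict_diff_singleton (h : M.ConnectedTo a x)
    (hC : M.IsCircuit C) (hxC : x ∈ C) (hax : a ≠ x) :
    ∃ b ∈ C \ {x}, (M ↾ (M.E \ {x})).ConnectedTo a b := by
  obtain ⟨C', hC', haC', hxC'⟩ := h.exists_isCircuit hax
  by_cases haC : a ∈ C
  · exact ⟨a, ⟨haC, hax⟩, .inl ⟨rfl, hC'.subset_ground haC', hax⟩⟩
  obtain ⟨D, hDU, hD, haD⟩ := hC'.strong_elimination hC hxC' hxC haC' haC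
  have hxD : x ∉ D := fun h ↦ (hDU h).2 rfl
  obtain ⟨b, hbD, hbC'⟩ := not_subset.1 fun hss ↦ hxD (hD.eq_of_subset_isCircuit hC' hss ▸ hxC')
  have hDR : D ⊆ M.E \ {x} := subset_sdiff_singleton hD.subset_ground hxD
  exact ⟨b, ⟨(hDU hbD).1.resolve_left hbC', ne_of_mem_of_not_mem hbD hxD⟩,
    .inr ⟨D, hD.isCircuit_restrict_of_subset hDR, haD, hbD⟩⟩

end Matroid

namespace LPM

variable {α : Type*} {M : Matroid α}

lemma circuit_iff_isCircuit {C : Set α} : Circuit M C ↔ M.IsCircuit C := by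
  rw [Matroid.isCircuit_iff_forall_ssubset, Matroid.Dep, Circuit]
  tauto

lemma connected_iff_forall_connectedTo :
    Connected M ↔ ∀ e ∈ M.E, ∀ f ∈ M.E, M.ConnectedTo e f := by
  refine ⟨fun h e he f hf ↦ ?_, fun h e he f hf hne ↦ ?_⟩
  · obtain rfl | hne := eq_or_ne e f
    · exact .inl ⟨rfl, he⟩
    obtain ⟨C, hC, heC, hfC⟩ := h e he f hf hne
    exact .inr ⟨C, circuit_iff_isCircuit.1 hC, heC, hfC⟩
  · obtain ⟨C, hC, heC, hfC⟩ := (h e he f hf).exists_isCircuit hne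
    exact ⟨C, circuit_iff_isCircuit.2 hC, heC, hfC⟩

end LPM

open LPM in
theorem stmt3_general {α : Type*} (M : Matroid α) (hfin : M.E.Finite)
    (hconn : Connected M)
    (X : Set α) (hX : NTConnFlat M X)
    (x : α) (hx : x ∈ X)
    (hXx : Connected (M ↾ (X \ {x}))) :
    Connected (delete M {x}) := by
  obtain ⟨hXflat, hXdep, hXconn⟩ := hX
  have hXE : X ⊆ M.E := hXflat.subset_ground
  have : M.Finite := ⟨hfin⟩
  rw [connected_iff_forall_connectedTo] at hconn hXconn hXx
  rw [delete, connected_iff_forall_connectedTo]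
  obtain ⟨C, hCX, hC, hxC⟩ := Matroid.exists_isCircuit_mem_subset hXE hXdep hXconn hx
  have hlink : ∀ a ∈ M.E \ {x}, ∃ b ∈ X \ {x}, (M ↾ (M.E \ {x})).ConnectedTo a b := by
    rintro a ⟨ha, hax⟩
    obtain ⟨b, hb, hab⟩ :=
      (hconn a ha x (hXE hx)).exists_connectedTo_restrict_diff_singleton hC hxC hax
    exact ⟨b, sdiff_subset_sdiff_left hCX hb, hab⟩
  intro y hy z hz
  obtain ⟨b, hb, hyb⟩ := hlink y hy
  obtain ⟨b', hb', hzb'⟩ := hlink z hz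
  have hbb' := (hXx b hb b' hb').of_restrict_subset (sdiff_subset_sdiff_left hXE) sdiff_subset
  exact (hyb.trans hbb').trans hzb'.symm

open LPM in
/-- If `X` is a nontrivial connected flat of a connected finite
matroid `M` with at least two elements, `x ∈ X`, and `M|(X − x)` is connected,
then `M \ x` is connected. -/
theorem stmt3 {α : Type*} (M : Matroid α) (hfin : M.E.Finite)
    (hconn : Connected M) (h2 : 2 ≤ M.E.ncard)
    (X : Set α) (hX : NTConnFlat M X)
    (x : α) (hx : x ∈ X)
    (hXx : Connected (M ↾ (X \ {x}))) :
    Connected (delete M {x}) :=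
  stmt3_general M hfin hconn X hX x hx hXx
end

section
/- Let m ≥ 1 and r ≥ 1 and let (N_1,…,N_r), N_i = [l_i, g_i] ⊆ {1,…,m+r}, be a lattice path presentation such that M[N] is a connected matroid. Then the set C = {l_1, l_2, …, l_r, g_r} has exactly r+1 elements and is a spanning circuit of M[N]. In particular, every connected lattice path matroid with at least two elements has a spanning circuit. -/
open Set
open scoped Matroid

/-!
Connectivity forces the intervals to chain: `l (i + 1) ≤ g i` for every `i`, and
`l (r - 1) < g (r - 1)`. Otherwise some threshold `t` is straddled by no interval, a circuit
through `1` and `m + r` splits into its parts below and above `t`, both independent, and the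
two matchings glue to one of the whole circuit. Given the chaining, the `r + 1` corners
`l 0 < ⋯ < l (r - 1) < g (r - 1)` are dependent by counting, while deleting any one of them
leaves a sequence whose `i`-th term lies in the `i`-th interval, a transversal. The rank is `r`
because `{l 0, …, l (r - 1)}` is already a transversal.
-/

namespace LPM

section PartialTransversal

variable {α ι : Type*} {N : ι → Set α} {I : Set α}

lemma IsPT.ncard_le [Finite ι] (h : IsPT N I) : I.ncard ≤ Nat.card ι := by
  obtain ⟨f, hf, -⟩ := h
  simpa only [Nat.card_coe_set_eq] using Nat.card_le_card_of_injective f hf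

lemma isPT_of_subset_range {σ : ι → α} (hmem : ∀ i, σ i ∈ N i) (hI : I ⊆ range σ) : IsPT N I := by
  choose f hf using fun x : I => hI x.2
  refine ⟨f, fun x y hxy => Subtype.ext ?_, fun x => hf x ▸ hmem (f x)⟩
  rw [← hf x, ← hf y, hxy]

/-- If no member of the family meets both `S` and `Sᶜ`, matchings of `I ∩ S` and `I \ S` use
disjoint sets of indices, so they glue to a matching of `I`. -/
lemma IsPT.of_inter_of_diff {S : Set α} (hN : ∀ i, N i ⊆ S ∨ N i ⊆ Sᶜ)
    (hin : IsPT N (I ∩ S)) (hout : IsPT N (I \ S)) : IsPT N I := by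
  classical
  obtain ⟨f, hf, hfN⟩ := hin
  obtain ⟨g, hg, hgN⟩ := hout
  have hsep : ∀ {x y : α} {i : ι}, x ∈ S → y ∉ S → x ∈ N i → y ∈ N i → False :=
    fun hx hy hxi hyi => (hN _).elim (fun h => hy (h hyi)) (fun h => h hxi hx)
  refine ⟨fun x => if hx : (x : α) ∈ S then f ⟨x, x.2, hx⟩ else g ⟨x, x.2, hx⟩, ?_, ?_⟩
  · intro x y hxy
    by_cases hx : (x : α) ∈ S <;> by_cases hy : (y : α) ∈ S <;>
      simp only [hx, hy, dite_true, dite_false] at hxy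
    · simpa [Subtype.ext_iff] using hf hxy
    · exact (hsep hx hy (hfN ⟨x, x.2, hx⟩) (hxy ▸ hgN ⟨y, y.2, hy⟩)).elim
    · exact (hsep hy hx (hfN ⟨y, y.2, hy⟩) (hxy ▸ hgN ⟨x, x.2, hx⟩)).elim
    · simpa [Subtype.ext_iff] using hg hxy
  · intro x
    by_cases hx : (x : α) ∈ S
    · simpa only [hx, dite_true] using hfN ⟨x, x.2, hx⟩
    · simpa only [hx, dite_false] using hgN ⟨x, x.2, hx⟩

end PartialTransversal

section LatticePath

variable {m r : ℕ} {P : LPP m r} {M : Matroid ℕ}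

lemma LPP.N_subset_Icc (P : LPP m r) (i : Fin r) : P.N i ⊆ Icc 1 (m + r) :=
  Icc_subset_Icc (P.one_le_l i) (P.g_le i)

lemma LPP.l_mem_N (P : LPP m r) (i : Fin r) : P.l i ∈ P.N i := ⟨le_rfl, P.l_le_g i⟩

lemma LPP.g_mem_N (P : LPP m r) (i : Fin r) : P.g i ∈ P.N i := ⟨P.l_le_g i, le_rfl⟩

lemma IsLPMOf.mem_ground_of_mem_N (hM : IsLPMOf P M) {x : ℕ} {i : Fin r} (hx : x ∈ P.N i) :
    x ∈ M.E :=
  hM.1 ▸ P.N_subset_Icc i hx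

lemma IsLPMOf.indep_iff (hM : IsLPMOf P M) {I : Set ℕ} : M.Indep I ↔ I ⊆ M.E ∧ IsPT P.N I := by
  rw [hM.1, hM.2]

lemma IsLPMOf.ncard_le_of_indep (hM : IsLPMOf P M) {I : Set ℕ} (hI : M.Indep I) :
    I.ncard ≤ r := by
  simpa using (hM.indep_iff.1 hI).2.ncard_le

lemma IsLPMOf.indep_of_subset_range (hM : IsLPMOf P M) {σ : Fin r → ℕ}
    (hmem : ∀ i, σ i ∈ P.N i) {I : Set ℕ} (hI : I ⊆ range σ) : M.Indep I := by
  refine hM.indep_iff.2 ⟨hI.trans ?_, isPT_of_subset_range hmem hI⟩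
  rintro _ ⟨i, rfl⟩
  exact hM.mem_ground_of_mem_N (hmem i)

lemma IsLPMOf.rk_eq_of_range_l_subset (hM : IsLPMOf P M) {X : Set ℕ} (hlX : range P.l ⊆ X) :
    rk M X = r := by
  have hbdd : ∀ n ∈ {n | ∃ I, I ⊆ X ∧ M.Indep I ∧ I.ncard = n}, n ≤ r := by
    rintro _ ⟨I, -, hI, rfl⟩
    exact hM.ncard_le_of_indep hI
  have hr : r ∈ {n | ∃ I, I ⊆ X ∧ M.Indep I ∧ I.ncard = n} :=
    ⟨range P.l, hlX, hM.indep_of_subset_range P.l_mem_N subset_rfl,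
      by simp [ncard_range_of_injective P.l_strictMono.injective]⟩
  exact le_antisymm (csSup_le ⟨r, hr⟩ hbdd) (le_csSup ⟨r, hbdd⟩ hr)

lemma IsLPMOf.circuit_range (hM : IsLPMOf P M) {c : Fin (r + 1) → ℕ}
    (hc : Function.Injective c) (hcE : range c ⊆ M.E)
    (hmem : ∀ (k : Fin (r + 1)) i, c (k.succAbove i) ∈ P.N i) : Circuit M (range c) := by
  refine ⟨hcE, fun hind => ?_, fun D hD => ?_⟩
  · have := hM.ncard_le_of_indep hind
    simp [ncard_range_of_injective hc] at this
  · obtain ⟨_, ⟨k, rfl⟩, hkD⟩ := exists_of_ssubset hD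
    refine hM.indep_of_subset_range (hmem k) ?_
    intro x hx
    obtain ⟨j, rfl⟩ := hD.subset hx
    obtain ⟨i, rfl⟩ := Fin.exists_succAbove_eq (x := j) (y := k) (by rintro rfl; exact hkD hx)
    exact ⟨i, rfl⟩

/-- An interval presentation that splits at `t` makes `{1, …, t}` a separator: no circuit can
contain both `1` and `m + r`. -/
lemma IsLPMOf.not_connected_of_split (hM : IsLPMOf P M) {t : ℕ} (ht₁ : 1 ≤ t)
    (ht : t < m + r) (hsplit : ∀ i, P.g i ≤ t ∨ t < P.l i) : ¬ Connected M := by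
  intro hconn
  have hE : ∀ {x}, 1 ≤ x → x ≤ m + r → x ∈ M.E := fun h₁ h₂ => hM.1 ▸ ⟨h₁, h₂⟩
  obtain ⟨C, ⟨hCE, hCdep, hCmin⟩, h1C, htopC⟩ :=
    hconn 1 (hE le_rfl (by omega)) (m + r) (hE (by omega) le_rfl) (by omega)
  have hlow : M.Indep (C ∩ Iic t) :=
    hCmin _ (inter_subset_left.ssubset_of_not_subset fun h => by
      have := (h htopC).2; simp only [mem_Iic] at this; omega)
  have hhigh : M.Indep (C \ Iic t) :=
    hCmin _ (sdiff_subset.ssubset_of_not_subset fun h => by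
      have := (h h1C).2; simp only [mem_Iic] at this; omega)
  refine hCdep (hM.indep_iff.2 ⟨hCE, IsPT.of_inter_of_diff (fun i => ?_)
    (hM.indep_iff.1 hlow).2 (hM.indep_iff.1 hhigh).2⟩)
  rcases hsplit i with h | h
  · exact .inl fun x hx => (mem_Iic.2 (hx.2.trans h))
  · exact .inr fun x hx => not_le.2 (h.trans_le hx.1)

end LatticePath

section Connected

variable {m n : ℕ} {P : LPP m (n + 1)} {M : Matroid ℕ}

lemma IsLPMOf.l_succ_le_g_castSucc (hM : IsLPMOf P M) (hconn : Connected M) (i : Fin n) :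
    P.l i.succ ≤ P.g i.castSucc := by
  by_contra! h
  refine hM.not_connected_of_split ((P.one_le_l _).trans (P.l_le_g _))
    (h.trans_le ((P.l_le_g _).trans (P.g_le _))) (fun j => ?_) hconn
  rcases le_or_gt j i.castSucc with hj | hj
  · exact .inl (P.g_strictMono.monotone hj)
  · exact .inr (h.trans_le (P.l_strictMono.monotone (Fin.castSucc_lt_iff_succ_le.1 hj)))

/-- Otherwise the last element `m + r` is a loop or a coloop, so `{1, …, m + r - 1}` separates. -/
lemma IsLPMOf.l_last_lt_g_last (hm : 1 ≤ m) (hM : IsLPMOf P M) (hconn : Connected M) :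
    P.l (Fin.last n) < P.g (Fin.last n) := by
  by_contra! h
  have hlg := le_antisymm h (P.l_le_g _)
  refine hM.not_connected_of_split (t := m + (n + 1) - 1) (by omega) (by omega) (fun j => ?_)
    hconn
  have hgj := P.g_le j
  by_cases hj : j = Fin.last n
  · subst hj
    omega
  · have := P.g_strictMono (Fin.lt_last_iff_ne_last.2 hj)
    have := P.g_le (Fin.last n)
    omega

end Connected

/-- The paper's circuit `{l₁, …, l_r, g_r}` as an `(r + 1)`-tuple. -/
def LPP.corners {m n : ℕ} (P : LPP m (n + 1)) : Fin (n + 2) → ℕ :=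
  Fin.snoc P.l (P.g (Fin.last n))

section Corners

variable {m n : ℕ} {P : LPP m (n + 1)}

lemma LPP.range_corners (P : LPP m (n + 1)) :
    range P.corners = range P.l ∪ {P.g (Fin.last n)} := by
  rw [LPP.corners, Fin.range_snoc, union_singleton]

lemma LPP.corners_strictMono (h : P.l (Fin.last n) < P.g (Fin.last n)) :
    StrictMono P.corners := by
  refine Fin.strictMono_iff_lt_succ.2 fun i => ?_
  induction i using Fin.lastCases with
  | last => simpa [LPP.corners] using h
  | cast j =>
    simpa only [LPP.corners, Fin.succ_castSucc, Fin.snoc_castSucc] using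
      P.l_strictMono j.castSucc_lt_succ

lemma LPP.corners_succAbove_mem (hoverlap : ∀ i : Fin n, P.l i.succ ≤ P.g i.castSucc)
    (k : Fin (n + 2)) (i : Fin (n + 1)) : P.corners (k.succAbove i) ∈ P.N i := by
  rcases lt_or_ge i.castSucc k with hk | hk
  · simpa [Fin.succAbove_of_castSucc_lt _ _ hk, LPP.corners] using P.l_mem_N i
  rw [Fin.succAbove_of_le_castSucc _ _ hk]
  induction i using Fin.lastCases with
  | last => simpa [LPP.corners] using P.g_mem_N _
  | cast j =>
    simpa only [LPP.corners, Fin.succ_castSucc, Fin.snoc_castSucc] using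
      ⟨P.l_strictMono.monotone j.castSucc_lt_succ.le, hoverlap j⟩

end Corners

end LPM

open LPM in
/-- If `M[N]` is connected (with `m, r ≥ 1`), then
`C = {l 0, …, l (r-1), g (r-1)}` has exactly `r + 1` elements and is a spanning
circuit of `M[N]`. -/
theorem stmt7 {m r : ℕ} (hm : 1 ≤ m) (hr : 1 ≤ r) (P : LPP m r)
    (M : Matroid ℕ) (hM : IsLPMOf P M) (hconn : Connected M) :
    (Set.range P.l ∪ {P.g ⟨r - 1, by omega⟩}).ncard = r + 1 ∧
    Circuit M (Set.range P.l ∪ {P.g ⟨r - 1, by omega⟩}) ∧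
    rk M (Set.range P.l ∪ {P.g ⟨r - 1, by omega⟩}) = rk M M.E := by
  obtain ⟨n, rfl⟩ : ∃ n, r = n + 1 := ⟨r - 1, by omega⟩
  rw [show (⟨n + 1 - 1, _⟩ : Fin (n + 1)) = Fin.last n from rfl, ← P.range_corners]
  have hc := P.corners_strictMono (hM.l_last_lt_g_last hm hconn)
  have hlC : range P.l ⊆ range P.corners := P.range_corners ▸ subset_union_left
  have hCE : range P.corners ⊆ M.E := by
    rw [P.range_corners, union_singleton]
    exact insert_subset (hM.mem_ground_of_mem_N (P.g_mem_N _))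
      (range_subset_iff.2 fun i => hM.mem_ground_of_mem_N (P.l_mem_N i))
  refine ⟨by simp [ncard_range_of_injective hc.injective], ?_, ?_⟩
  · exact hM.circuit_range hc.injective hCE
      (P.corners_succAbove_mem (hM.l_succ_le_g_castSucc hconn))
  · rw [hM.rk_eq_of_range_l_subset hlC, hM.rk_eq_of_range_l_subset (hlC.trans hCE)]
end

section
/- Let (N_1,…,N_r) be a lattice path presentation with incidence function n, let C = {c_0 < c_1 < ⋯ < c_k} ⊆ {1,…,m+r}, and let n(C) = {i_1 < i_2 < ⋯ < i_s}. Then C is a circuit of the lattice path matroid M[N] if and only if (1) s = k, (2) c_0 ∈ N_{i_1}, (3) c_k ∈ N_{i_k}, and (4) c_j ∈ N_{i_j} ∩ N_{i_{j+1}} for every j with 0 < j < k. Furthermore, if C is a circuit, then i_{h+1} = i_h + 1 for all 1 ≤ h < k. -/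
open Set
open scoped Matroid

/-!
By Hall's theorem, a minimal set `C` that is not a partial transversal satisfies
`|n(C)| = |C| - 1`. If `C = {c_0 < ⋯ < c_k}` is a circuit, each `C \ {c_p}` is matched into the
`k` intervals `N_{i_1}, …, N_{i_k}` of `n(C)`, hence onto them; as both the elements and the
intervals are ordered, such a matching can be uncrossed into the order-preserving one, so
the `q`-th remaining element lies in `N_{i_q}`. The cases `p = 0` and `p = k` give
`c_{q-1}, c_q ∈ N_{i_q}`.
Conversely, these memberships match every `C \ {c_p}`, while `C` has more elements than `n(C)`.
Finally, an interval strictly between `N_{i_q}` and `N_{i_{q+1}}` would contain `c_q` as well.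
-/

open Set Function

namespace Fin

theorem exists_le_and_le_apply_of_injective {t : ℕ} {σ : Fin t → Fin t} (hσ : Injective σ)
    (p : Fin t) : ∃ q ≤ p, p ≤ σ q := by
  by_contra! h
  have := Finset.card_le_card_of_injOn σ
    (fun q hq => Finset.mem_Iio.2 (h q (Finset.mem_Iic.1 hq))) hσ.injOn
  simp [card_Iic, card_Iio] at this

theorem exists_ge_and_apply_le_of_injective {t : ℕ} {σ : Fin t → Fin t} (hσ : Injective σ)
    (p : Fin t) : ∃ q, p ≤ q ∧ σ q ≤ p := by
  obtain ⟨q, hqp, hpq⟩ := exists_le_and_le_apply_of_injective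
    (rev_injective.comp (hσ.comp rev_injective)) p.rev
  exact ⟨q.rev, le_rev_iff.1 hqp, by simpa [rev_le_iff] using hpq⟩

theorem range_comp_succAbove {α : Type*} {k : ℕ} {c : Fin (k + 1) → α} (hc : Injective c)
    (p : Fin (k + 1)) : range (c ∘ p.succAbove) = range c \ {c p} := by
  rw [range_comp, range_succAbove, compl_eq_univ_sdiff, image_sdiff hc, image_univ,
    image_singleton]

end Fin

namespace LPM

def incidence {α ι : Type*} (N : ι → Set α) (X : Set α) : Set ι := {i | (X ∩ N i).Nonempty}

section Transversal

variable {α ι κ : Type*} {N : ι → Set α} {X Y : Set α}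

theorem incidence_mono (h : X ⊆ Y) : incidence N X ⊆ incidence N Y :=
  fun _ ⟨x, hxX, hxN⟩ => ⟨x, h hxX, hxN⟩

theorem IsPT.mono (hY : IsPT N Y) (h : X ⊆ Y) : IsPT N X := by
  obtain ⟨f, hf, hfN⟩ := hY
  exact ⟨f ∘ inclusion h, hf.comp (inclusion_injective h), fun x => hfN _⟩

theorem isPT_range_iff {e : κ → α} (he : Injective e) :
    IsPT N (range e) ↔ ∃ φ : κ → ι, Injective φ ∧ ∀ p, e p ∈ N (φ p) := by
  let eqv := Equiv.ofInjective e he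
  constructor
  · rintro ⟨f, hf, hfN⟩
    exact ⟨f ∘ eqv, hf.comp eqv.injective, fun p => hfN (eqv p)⟩
  · rintro ⟨φ, hφ, hφN⟩
    refine ⟨φ ∘ eqv.symm, hφ.comp eqv.symm.injective, fun x => ?_⟩
    simpa [eqv, Equiv.apply_ofInjective_symm] using hφN (eqv.symm x)

theorem IsPT.ncard_le_ncard_incidence [Finite ι] (h : IsPT N X) :
    X.ncard ≤ (incidence N X).ncard := by
  obtain ⟨f, hf, hfN⟩ := h
  rw [← Nat.card_coe_set_eq, ← Nat.card_coe_set_eq]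
  exact Nat.card_le_card_of_injective (fun x => ⟨f x, x, x.2, hfN x⟩)
    fun a b hab => hf (congrArg Subtype.val hab)

theorem isPT_of_forall_ncard_le [Finite ι] (h : ∀ D ⊆ X, D.ncard ≤ (incidence N D).ncard) :
    IsPT N X := by
  classical
  have := Fintype.ofFinite ι
  refine (Fintype.all_card_le_filter_rel_iff_exists_injective
    (fun (x : X) i => (x : α) ∈ N i)).1 fun A => ?_
  have hA : (Subtype.val '' (A : Set X)).ncard = A.card := by
    rw [ncard_image_of_injective _ Subtype.val_injective, ncard_coe_finset]
  have hnA : incidence N (Subtype.val '' (A : Set X)) =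
      ↑({i | ∃ a ∈ A, (a : α) ∈ N i} : Finset ι) := by
    ext i
    simp only [incidence, Finset.coe_filter, Finset.mem_univ, true_and, mem_ofPred_eq]
    constructor
    · rintro ⟨_, ⟨a, ha, rfl⟩, hN⟩
      exact ⟨a, ha, hN⟩
    · rintro ⟨a, ha, hN⟩
      exact ⟨a, ⟨a, ha, rfl⟩, hN⟩
  have := h _ (Subtype.coe_image_subset X A)
  rwa [hA, hnA, ncard_coe_finset] at this

theorem ncard_incidence_add_one_of_minimal [Finite ι] (hdep : ¬ IsPT N X)
    (hmin : ∀ D ⊂ X, IsPT N D) : (incidence N X).ncard + 1 = X.ncard := by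
  have hlt : (incidence N X).ncard < X.ncard := by
    by_contra! hle
    refine hdep (isPT_of_forall_ncard_le fun D hD => ?_)
    obtain rfl | hDX := hD.eq_or_ssubset
    · exact hle
    · exact (hmin D hDX).ncard_le_ncard_incidence
  obtain ⟨x, hx⟩ := nonempty_of_ncard_ne_zero hlt.ne_bot
  have hdel := (hmin _ (sdiff_singleton_ssubset.2 hx)).ncard_le_ncard_incidence
  rw [ncard_sdiff_singleton_of_mem hx] at hdel
  have := ncard_le_ncard (incidence_mono (sdiff_subset : X \ {x} ⊆ X) (N := N)) (toFinite _)
  omega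

end Transversal

theorem mem_Icc_of_mem_Icc_comp_injective {β : Type*} [Preorder β] {t : ℕ} {e l g : Fin t → β}
    (he : Monotone e) (hl : Monotone l) (hg : Monotone g) {σ : Fin t → Fin t}
    (hσ : Injective σ) (h : ∀ p, e p ∈ Icc (l (σ p)) (g (σ p))) (p : Fin t) :
    e p ∈ Icc (l p) (g p) := by
  obtain ⟨q, hqp, hpq⟩ := Fin.exists_le_and_le_apply_of_injective hσ p
  obtain ⟨q', hpq', hqp'⟩ := Fin.exists_ge_and_apply_le_of_injective hσ p
  exact ⟨(hl hpq).trans ((h q).1.trans (he hqp)), (he hpq').trans ((h q').2.trans (hg hqp'))⟩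

def Links {α : Type*} {k : ℕ} (A : Fin k → Set α) (c : Fin (k + 1) → α) : Prop :=
  ∀ q, c q.castSucc ∈ A q ∧ c q.succ ∈ A q

theorem links_iff {α : Type*} {k : ℕ} {A : Fin k → Set α} {c : Fin (k + 1) → α} :
    Links A c ↔
      (∀ hk0 : 0 < k, c ⟨0, k.succ_pos⟩ ∈ A ⟨0, hk0⟩) ∧
      (∀ hk0 : 0 < k, c ⟨k, k.lt_succ_self⟩ ∈ A ⟨k - 1, Nat.sub_one_lt_of_lt hk0⟩) ∧
      (∀ (j : ℕ) (_ : 0 < j) (hj2 : j < k),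
        c ⟨j, Nat.lt_succ_of_lt hj2⟩ ∈ A ⟨j - 1, (Nat.sub_le j 1).trans_lt hj2⟩ ∩ A ⟨j, hj2⟩) := by
  constructor
  · intro h
    refine ⟨fun hk0 => (h ⟨0, hk0⟩).1, fun hk0 => ?_, fun j hj1 hj2 => ⟨?_, (h ⟨j, hj2⟩).1⟩⟩
    · obtain ⟨k, rfl⟩ := Nat.exists_eq_add_one_of_ne_zero hk0.ne'
      exact (h ⟨k, by omega⟩).2
    · obtain ⟨j, rfl⟩ := Nat.exists_eq_add_one_of_ne_zero hj1.ne'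
      exact (h ⟨j, by omega⟩).2
  · rintro ⟨hfirst, hlast, hmid⟩ ⟨q, hq⟩
    constructor
    · rcases Nat.eq_zero_or_pos q with rfl | hq0
      · exact hfirst hq
      · exact (hmid q hq0 hq).2
    · rcases Nat.lt_or_ge (q + 1) k with hq1 | hq1
      · exact (hmid (q + 1) (by omega) hq1).1
      · obtain rfl : k = q + 1 := by omega
        exact hlast (Nat.succ_pos q)

theorem Links.isPT_range_comp_succAbove {α κ : Type*} {k : ℕ} {N : κ → Set α}
    {c : Fin (k + 1) → α} {ι : Fin k → κ} (h : Links (N ∘ ι) c) (hc : Injective c)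
    (hι : Injective ι) (p : Fin (k + 1)) : IsPT N (range (c ∘ p.succAbove)) := by
  refine (isPT_range_iff (hc.comp Fin.succAbove_right_injective)).2 ⟨ι, hι, fun q => ?_⟩
  rcases lt_or_ge q.castSucc p with hqp | hpq
  · simpa [Fin.succAbove_of_castSucc_lt p q hqp] using (h q).1
  · simpa [Fin.succAbove_of_le_castSucc p q hpq] using (h q).2

namespace LPP

variable {m r : ℕ} (P : LPP m r)

theorem mem_N_of_le_of_le {x : ℕ} {a b i : Fin r} (ha : x ∈ P.N a) (hb : x ∈ P.N b)
    (hai : a ≤ i) (hib : i ≤ b) : x ∈ P.N i :=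
  ⟨(P.l_strictMono.monotone hib).trans hb.1, ha.2.trans (P.g_strictMono.monotone hai)⟩

theorem mem_N_of_isPT_range {t : ℕ} {e : Fin t → ℕ} (he : StrictMono e) {ι : Fin t → Fin r}
    (hι : Monotone ι) (hPT : IsPT P.N (range e)) (hrange : ∀ i p, e p ∈ P.N i → i ∈ range ι)
    (p : Fin t) : e p ∈ P.N (ι p) := by
  obtain ⟨φ, hφ, hφN⟩ := (isPT_range_iff he.injective).1 hPT
  choose σ hσ using fun q => hrange (φ q) q (hφN q)
  have hσinj : Injective σ := fun a b hab => hφ (by rw [← hσ a, ← hσ b, hab])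
  refine mem_Icc_of_mem_Icc_comp_injective he.monotone (P.l_strictMono.monotone.comp hι)
    (P.g_strictMono.monotone.comp hι) hσinj (fun q => ?_) p
  change e q ∈ P.N (ι (σ q))
  exact hσ q ▸ hφN q

end LPP

section Circuit

variable {m r k : ℕ} {P : LPP m r} {c : Fin (k + 1) → ℕ} {ι : Fin k → Fin r}

theorem IsLPMOf.circuit_iff {M : Matroid ℕ} (hM : IsLPMOf P M) {X : Set ℕ} :
    Circuit M X ↔ X ⊆ Icc 1 (m + r) ∧ ¬ IsPT P.N X ∧ ∀ D ⊂ X, IsPT P.N D := by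
  obtain ⟨hE, hI⟩ := hM
  simp only [Circuit, hE, hI]
  constructor
  · rintro ⟨hX, hdep, hmin⟩
    exact ⟨hX, fun h => hdep ⟨hX, h⟩, fun D hD => (hmin D hD).2⟩
  · rintro ⟨hX, hdep, hmin⟩
    exact ⟨hX, fun h => hdep h.2, fun D hD => ⟨hD.subset.trans hX, hmin D hD⟩⟩

theorem links_of_minimal (hc : StrictMono c) (hι : Monotone ι)
    (hn : range ι = incidence P.N (range c)) (hmin : ∀ D ⊂ range c, IsPT P.N D) :
    Links (P.N ∘ ι) c := by
  have hdel : ∀ (p : Fin (k + 1)) q, c (p.succAbove q) ∈ P.N (ι q) := fun p =>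
    P.mem_N_of_isPT_range (hc.comp (Fin.strictMono_succAbove p)) hι
      (hmin _ (by
        rw [Fin.range_comp_succAbove hc.injective]
        exact sdiff_singleton_ssubset.2 ⟨p, rfl⟩))
      (fun i q h => hn ▸ ⟨_, mem_range_self _, h⟩)
  exact fun q => ⟨by simpa using hdel (Fin.last k) q, by simpa using hdel 0 q⟩

theorem minimal_of_links (hc : Injective c) (hι : Injective ι)
    (hn : range ι = incidence P.N (range c)) (h : Links (P.N ∘ ι) c) :
    ¬ IsPT P.N (range c) ∧ ∀ D ⊂ range c, IsPT P.N D := by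
  refine ⟨fun hPT => ?_, fun D hD => ?_⟩
  · have := hPT.ncard_le_ncard_incidence
    rw [← hn, ncard_range_of_injective hc, ncard_range_of_injective hι] at this
    simp at this
  · obtain ⟨_, ⟨p, rfl⟩, hp⟩ := exists_of_ssubset hD
    refine (h.isPT_range_comp_succAbove hc hι p).mono ?_
    rw [Fin.range_comp_succAbove hc]
    exact subset_sdiff_singleton hD.subset hp

theorem Links.val_succ_eq (h : Links (P.N ∘ ι) c) (hι : StrictMono ι)
    (hn : range ι = incidence P.N (range c)) (j : ℕ) (hj : j + 1 < k) :
    (ι ⟨j + 1, hj⟩ : ℕ) = (ι ⟨j, Nat.lt_of_succ_lt hj⟩ : ℕ) + 1 := by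
  set a : Fin k := ⟨j, Nat.lt_of_succ_lt hj⟩
  set b : Fin k := ⟨j + 1, hj⟩
  have hab : ι a < ι b := hι (Fin.mk_lt_mk.2 (Nat.lt_succ_self j))
  by_contra hne
  set i : Fin r := ⟨ι a + 1, by omega⟩
  have hai : ι a < i := Fin.mk_lt_mk.2 (Nat.lt_succ_self _)
  have hib : i < ι b := by rw [Fin.lt_def]; dsimp [i]; omega
  obtain ⟨p, hp⟩ : i ∈ range ι :=
    hn ▸ ⟨_, mem_range_self _, P.mem_N_of_le_of_le (h a).2 (h b).1 hai.le hib.le⟩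
  rw [← hp, hι.lt_iff_lt, Fin.lt_def] at hai hib
  dsimp [a, b] at hai hib
  omega

end Circuit

end LPM

open LPM in
/-- Circuit characterization in a lattice path matroid: for
`C = {c 0 < c 1 < ⋯ < c k} ⊆ {1,…,m+r}` and `n(C) = {ι 0 < ι 1 < ⋯ < ι (s-1)}`,
`C` is a circuit of `M[N]` iff (1) `s = k`, (2) `c 0 ∈ N (ι 0)`,
(3) `c k ∈ N (ι (k-1))`, and (4) `c j ∈ N (ι (j-1)) ∩ N (ι j)` for `0 < j < k`;
moreover the indices in `n(C)` of a circuit are consecutive. -/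
theorem stmt11 {m r k s : ℕ} (P : LPP m r) (M : Matroid ℕ) (hM : IsLPMOf P M)
    (c : Fin (k + 1) → ℕ) (hc : StrictMono c)
    (hcE : Set.range c ⊆ Set.Icc 1 (m + r))
    (ι : Fin s → Fin r) (hι : StrictMono ι)
    (hn : Set.range ι = {i : Fin r | (Set.range c ∩ P.N i).Nonempty}) :
    (Circuit M (Set.range c) ↔
      ∃ hs : s = k,
        (∀ hk0 : 0 < k, c ⟨0, by omega⟩ ∈ P.N (ι ⟨0, by omega⟩)) ∧
        (∀ hk0 : 0 < k, c ⟨k, by omega⟩ ∈ P.N (ι ⟨s - 1, by omega⟩)) ∧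
        (∀ (j : ℕ) (hj1 : 0 < j) (hj2 : j < k),
          c ⟨j, by omega⟩ ∈ P.N (ι ⟨j - 1, by omega⟩) ∩ P.N (ι ⟨j, by omega⟩))) ∧
    (Circuit M (Set.range c) →
      ∀ (j : ℕ) (hj : j + 1 < s),
        (ι ⟨j + 1, hj⟩ : ℕ) = (ι ⟨j, by omega⟩ : ℕ) + 1) := by
  change range ι = incidence P.N (range c) at hn
  have hcircuit : Circuit M (range c) ↔ ¬ IsPT P.N (range c) ∧ ∀ D ⊂ range c, IsPT P.N D := by
    rw [hM.circuit_iff, and_iff_right hcE]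
  have hs : Circuit M (range c) → s = k := fun hC => by
    have := ncard_incidence_add_one_of_minimal (hcircuit.1 hC).1 (hcircuit.1 hC).2
    rw [← hn, ncard_range_of_injective hι.injective,
      ncard_range_of_injective hc.injective] at this
    simpa using this
  refine ⟨⟨fun hC => ?_, ?_⟩, fun hC => ?_⟩
  · obtain rfl := hs hC
    exact ⟨rfl, links_iff.1 (links_of_minimal hc hι.monotone hn (hcircuit.1 hC).2)⟩
  · rintro ⟨rfl, hlinks⟩
    exact hcircuit.2 (minimal_of_links hc.injective hι.injective hn (links_iff.2 hlinks))
  · obtain rfl := hs hC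
    exact (links_of_minimal hc hι.monotone hn (hcircuit.1 hC).2).val_succ_eq hι hn
end
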